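/- arXiv:2004.02474 — 2 statements merged into one kernel-verified Lean document; each statement's English description precedes it below -/
import Mathlib

section
/- Let α ≥ −1/2 and α ≥ β > −1, and let n ≥ 1 be a fixed integer. Then for every t ∈ [t_{n,n}, 1) and every k ∈ {1, …, n} one has the strict inequality P_k^{(α,β)}(t)/P_k^{(α,β)}(1) < P_{k−1}^{(α,β)}(t)/P_{k−1}^{(α,β)}(1). -/
open MeasureTheory Real Filter

/-- Jacobi polynomials defined by the three-term recurrence. -/
noncomputable def jacobiP (α β : ℝ) : ℕ → ℝ → ℝ
  | 0 => fun _ => 1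
  | 1 => fun t => ((α + β + 2) * t + (α - β)) / 2
  | (n + 2) => fun t =>
      let m : ℝ := (n : ℝ) + 1
      let a := (2 * m + α + β) * (2 * m + α + β + 1) * (2 * m + α + β + 2)
      let b := (2 * m + α + β + 1) * (α ^ 2 - β ^ 2)
      let c := (m + α) * (m + β) * (2 * m + α + β + 2)
      let d := 2 * (m + 1) * (m + α + β + 1) * (2 * m + α + β)
      ((a / d) * t + b / d) * jacobiP α β (n + 1) t - (c / d) * jacobiP α β n t

/-- The incomplete beta function. -/
noncomputable def incBeta (a b x : ℝ) : ℝ :=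
  ∫ s in (0:ℝ)..x, s ^ (a - 1) * (1 - s) ^ (b - 1)

/-- The Bessel function of the first kind. -/
noncomputable def besselJ (α x : ℝ) : ℝ :=
  ∑' m : ℕ, ((-1 : ℝ) ^ m / (m.factorial * Real.Gamma (m + α + 1))) * (x / 2) ^ (2 * (m:ℝ) + α)

/-!
For `α, β > -1` the recurrence coefficients `A_n` and `C_n` are positive when `n ≥ 1`.
Then `P_{n+2}` is negative at the largest zero of `P_{n+1}` (there it equals `-C_{n+1} P_n`) and
positive for large arguments, so its own largest zero lies further right; inductively, all
`P_j` with `j ≤ n + 1` are positive to the right of the largest zero of `P_{n+1}`.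
The cross term `D_k(t) = P_{k+1}(t) P_k(1) - P_k(t) P_{k+1}(1)` obeys
`D_{k+1} = A_{k+1} (t - 1) P_{k+1}(t) P_{k+1}(1) + C_{k+1} D_k`, so `D_k(t) < 0` for `t < 1`
as long as the `P_j` are positive at `t` and at `1`.
-/

theorem exists_zero_forall_pos_of_neg {f : ℝ → ℝ} (hf : Continuous f) {z : ℝ} (hz : f z < 0)
    (hev : ∀ᶠ s in atTop, 0 < f s) : ∃ w, z < w ∧ f w = 0 ∧ ∀ s, w < s → 0 < f s := by
  obtain ⟨M, hM⟩ := eventually_atTop.1 hev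
  have zero_ge_of_nonpos : ∀ s, f s ≤ 0 → ∃ u, s ≤ u ∧ f u = 0 := fun s hs => by
    obtain ⟨u, hu, hfu⟩ := intermediate_value_Icc (le_max_left s M) hf.continuousOn
      ⟨hs, (hM _ (le_max_right s M)).le⟩
    exact ⟨u, hu.1, hfu⟩
  set Z := Set.Ici z ∩ f ⁻¹' {0}
  have hZclosed : IsClosed Z := isClosed_Ici.inter (isClosed_singleton.preimage hf)
  have hZbdd : BddAbove Z := ⟨M, fun s hs => not_lt.1 fun h => (hM s h.le).ne' hs.2⟩
  have hZne : Z.Nonempty := by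
    obtain ⟨u, hu, hfu⟩ := zero_ge_of_nonpos z hz.le
    exact ⟨u, hu, hfu⟩
  obtain ⟨hzw, hw⟩ : sSup Z ∈ Z := hZclosed.csSup_mem hZne hZbdd
  refine ⟨sSup Z, hzw.lt_of_ne fun h => ?_, hw, fun s hs => not_le.1 fun hfs => ?_⟩
  · rw [← h] at hw
    exact hz.ne hw
  · obtain ⟨u, hu, hfu⟩ := zero_ge_of_nonpos s hfs
    exact (hs.trans_le hu).not_ge (le_csSup hZbdd ⟨hzw.trans (hs.le.trans hu), hfu⟩)

noncomputable def jacobiA (α β : ℝ) (n : ℕ) : ℝ :=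
  (2 * n + α + β) * (2 * n + α + β + 1) * (2 * n + α + β + 2) /
    (2 * (n + 1) * (n + α + β + 1) * (2 * n + α + β))

noncomputable def jacobiB (α β : ℝ) (n : ℕ) : ℝ :=
  (2 * n + α + β + 1) * (α ^ 2 - β ^ 2) / (2 * (n + 1) * (n + α + β + 1) * (2 * n + α + β))

noncomputable def jacobiC (α β : ℝ) (n : ℕ) : ℝ :=
  (n + α) * (n + β) * (2 * n + α + β + 2) / (2 * (n + 1) * (n + α + β + 1) * (2 * n + α + β))

theorem jacobiP_zero (α β t : ℝ) : jacobiP α β 0 t = 1 := rfl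

theorem jacobiP_one (α β t : ℝ) : jacobiP α β 1 t = ((α + β + 2) * t + (α - β)) / 2 := rfl

theorem jacobiP_add_two (α β : ℝ) (n : ℕ) (t : ℝ) :
    jacobiP α β (n + 2) t =
      (jacobiA α β (n + 1) * t + jacobiB α β (n + 1)) * jacobiP α β (n + 1) t -
        jacobiC α β (n + 1) * jacobiP α β n t := by
  simp only [jacobiP, jacobiA, jacobiB, jacobiC]
  push_cast
  ring

theorem continuous_jacobiP (α β : ℝ) : ∀ n, Continuous (jacobiP α β n)
  | 0 => continuous_const
  | 1 => by simp only [jacobiP]; fun_prop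
  | n + 2 => by
    have := continuous_jacobiP α β n
    have := continuous_jacobiP α β (n + 1)
    rw [funext (jacobiP_add_two α β n)]
    fun_prop

theorem jacobiP_cross_add_two (α β : ℝ) (n : ℕ) (x y : ℝ) :
    jacobiP α β (n + 2) x * jacobiP α β (n + 1) y - jacobiP α β (n + 1) x * jacobiP α β (n + 2) y =
      jacobiA α β (n + 1) * (x - y) * (jacobiP α β (n + 1) x * jacobiP α β (n + 1) y) +
        jacobiC α β (n + 1) *
          (jacobiP α β (n + 1) x * jacobiP α β n y - jacobiP α β n x * jacobiP α β (n + 1) y) := by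
  simp only [jacobiP_add_two]
  ring

section Positivity

variable {α β : ℝ} (hα : -1 < α) (hβ : -1 < β)
include hα hβ

theorem jacobiA_succ_pos (n : ℕ) : 0 < jacobiA α β (n + 1) := by
  unfold jacobiA
  push_cast
  have : (0 : ℝ) ≤ n := n.cast_nonneg
  apply div_pos <;> apply mul_pos <;> (try apply mul_pos) <;> (try apply mul_pos) <;> linarith

theorem jacobiC_succ_pos (n : ℕ) : 0 < jacobiC α β (n + 1) := by
  unfold jacobiC
  push_cast
  have : (0 : ℝ) ≤ n := n.cast_nonneg
  apply div_pos <;> apply mul_pos <;> (try apply mul_pos) <;> (try apply mul_pos) <;> linarith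

theorem eventually_one_le_jacobiP_le_succ (n : ℕ) :
    ∀ᶠ s in atTop, 1 ≤ jacobiP α β n s ∧ jacobiP α β n s ≤ jacobiP α β (n + 1) s := by
  induction n with
  | zero =>
    filter_upwards [eventually_ge_atTop ((2 - (α - β)) / (α + β + 2))] with s hs
    rw [div_le_iff₀ (by linarith)] at hs
    simp only [jacobiP_zero, jacobiP_one, zero_add]
    constructor <;> linarith
  | succ n ih =>
    have hA := jacobiA_succ_pos hα hβ n
    have hC := jacobiC_succ_pos hα hβ n
    filter_upwards [ih, eventually_ge_atTop ((1 + jacobiC α β (n + 1) - jacobiB α β (n + 1)) /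
      jacobiA α β (n + 1))] with s ⟨h1, hle⟩ hs
    rw [div_le_iff₀ hA] at hs
    refine ⟨h1.trans hle, ?_⟩
    rw [jacobiP_add_two]
    nlinarith

theorem exists_largest_zero_jacobiP_succ (n : ℕ) :
    ∃ z, jacobiP α β (n + 1) z = 0 ∧ (∀ j ≤ n + 1, ∀ s, z < s → 0 < jacobiP α β j s) ∧
      ∀ j ≤ n, ∀ s, z ≤ s → 0 < jacobiP α β j s := by
  induction n with
  | zero =>
    have hαβ : 0 < α + β + 2 := by linarith
    refine ⟨(β - α) / (α + β + 2), ?_, fun j hj s hs => ?_, fun j hj s _ => ?_⟩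
    · rw [jacobiP_one]
      field_simp
      ring
    · rw [div_lt_iff₀ hαβ] at hs
      interval_cases j
      · exact zero_lt_one
      · rw [jacobiP_one]
        linarith
    · obtain rfl : j = 0 := Nat.le_zero.1 hj
      exact zero_lt_one
  | succ n ih =>
    obtain ⟨z, hz, hpos_gt, hpos_ge⟩ := ih
    have hneg : jacobiP α β (n + 2) z < 0 := by
      rw [jacobiP_add_two, hz]
      nlinarith [jacobiC_succ_pos hα hβ n, hpos_ge n le_rfl z le_rfl]
    have hev : ∀ᶠ s in atTop, 0 < jacobiP α β (n + 2) s :=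
      (eventually_one_le_jacobiP_le_succ hα hβ (n + 1)).mono fun s hs => by linarith [hs.1, hs.2]
    obtain ⟨w, hzw, hw, hpos_w⟩ :=
      exists_zero_forall_pos_of_neg (continuous_jacobiP α β (n + 2)) hneg hev
    refine ⟨w, hw, fun j hj s hs => ?_, fun j hj s hs => hpos_gt j hj s (hzw.trans_le hs)⟩
    rcases hj.lt_or_eq with hj | rfl
    · exact hpos_gt j (Nat.le_of_lt_succ hj) s (hzw.trans hs)
    · exact hpos_w s hs

theorem jacobiP_cross_neg {t : ℝ} (ht : t < 1) (n : ℕ)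
    (hpos : ∀ j ≤ n, 0 < jacobiP α β j t ∧ 0 < jacobiP α β j 1) :
    jacobiP α β (n + 1) t * jacobiP α β n 1 - jacobiP α β n t * jacobiP α β (n + 1) 1 < 0 := by
  induction n with
  | zero =>
    simp only [zero_add, jacobiP_zero, jacobiP_one]
    nlinarith [mul_neg_of_pos_of_neg (by linarith : 0 < α + β + 2) (sub_neg.2 ht)]
  | succ n ih =>
    rw [jacobiP_cross_add_two]
    obtain ⟨ht_pos, h1_pos⟩ := hpos (n + 1) le_rfl
    have hC := jacobiC_succ_pos hα hβ n
    have hD := ih fun j hj => hpos j (hj.trans n.le_succ)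
    have hA : jacobiA α β (n + 1) * (t - 1) < 0 :=
      mul_neg_of_pos_of_neg (jacobiA_succ_pos hα hβ n) (by linarith)
    nlinarith [mul_pos ht_pos h1_pos]

theorem jacobiP_succ_div_lt_div {t : ℝ} (ht : t < 1) (n : ℕ)
    (hpos_t : ∀ j ≤ n, 0 < jacobiP α β j t) (hpos_one : ∀ j ≤ n + 1, 0 < jacobiP α β j 1) :
    jacobiP α β (n + 1) t / jacobiP α β (n + 1) 1 < jacobiP α β n t / jacobiP α β n 1 := by
  rw [div_lt_div_iff₀ (hpos_one _ le_rfl) (hpos_one n n.le_succ)]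
  linarith [jacobiP_cross_neg hα hβ ht n fun j hj => ⟨hpos_t j hj, hpos_one j (hj.trans n.le_succ)⟩]

end Positivity

theorem jacobi_ordering_strict_general (α β : ℝ) (hα : -1/2 ≤ α) (hβ : -1 < β)
    (n : ℕ) (tnn : ℝ)
    (hzero : jacobiP α β n tnn = 0)
    (hmax : ∀ t : ℝ, jacobiP α β n t = 0 → t ≤ tnn)
    (t : ℝ) (ht : tnn ≤ t) (ht1 : t < 1)
    (k : ℕ) (hk1 : 1 ≤ k) (hkn : k ≤ n) :
    jacobiP α β k t / jacobiP α β k 1 <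
      jacobiP α β (k - 1) t / jacobiP α β (k - 1) 1 := by
  obtain ⟨m, rfl⟩ : ∃ m, n = m + 1 := ⟨n - 1, by omega⟩
  obtain ⟨k, rfl⟩ : ∃ k', k = k' + 1 := ⟨k - 1, by omega⟩
  have hα' : -1 < α := by linarith
  obtain ⟨z, hz, hpos_gt, hpos_ge⟩ := exists_largest_zero_jacobiP_succ hα' hβ m
  have hz_eq : z = tnn :=
    (hmax z hz).antisymm (not_lt.1 fun h => (hpos_gt (m + 1) le_rfl tnn h).ne' hzero)
  subst hz_eq
  exact jacobiP_succ_div_lt_div hα' hβ ht1 k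
    (fun j hj => hpos_ge j (by omega) t ht)
    (fun j hj => hpos_gt j (by omega) 1 (ht.trans_lt ht1))

/-- Ordering of normalized Jacobi polynomials near 1 (Lemma 2.1 / `ordering-PN`):
for `t ∈ [t_{n,n}, 1)` and `1 ≤ k ≤ n`,
`P_k(t)/P_k(1) < P_{k-1}(t)/P_{k-1}(1)`. -/
theorem jacobi_ordering_strict (α β : ℝ) (hα : -1/2 ≤ α) (hβα : β ≤ α) (hβ : -1 < β)
    (n : ℕ) (hn : 1 ≤ n) (tnn : ℝ)
    (hzero : jacobiP α β n tnn = 0)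
    (hmax : ∀ t : ℝ, jacobiP α β n t = 0 → t ≤ tnn)
    (t : ℝ) (ht : tnn ≤ t) (ht1 : t < 1)
    (k : ℕ) (hk1 : 1 ≤ k) (hkn : k ≤ n) :
    jacobiP α β k t / jacobiP α β k 1 <
      jacobiP α β (k - 1) t / jacobiP α β (k - 1) 1 :=
  jacobi_ordering_strict_general α β hα hβ n tnn hzero hmax t ht ht1 k hk1 hkn
end

section
/- Let α ≥ −1/2 and α ≥ β > −1, and let n ≥ 1 be a fixed integer. Then for every t ∈ [t_{n,n}, 1) and every k ∈ {0, 1, …, n} one has P_k^{(α,β)}(t)/P_k^{(α,β)}(1) ≥ P_n^{(α,β)}(t)/P_n^{(α,β)}(1) ≥ 0; in particular P_k^{(α,β)}(t) ≥ 0. -/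
open MeasureTheory Real Filter

lemma jacobiP_continuous (α β : ℝ) : ∀ k, Continuous (jacobiP α β k)
  | 0 => continuous_const
  | 1 => by unfold jacobiP; fun_prop
  | (k+2) => by
      have h1 := jacobiP_continuous α β (k+1)
      have h0 := jacobiP_continuous α β k
      unfold jacobiP; fun_prop

lemma jacobiP_rec (α β t : ℝ) (n : ℕ) : jacobiP α β (n+2) t =
    (((2 * ((n:ℝ)+1) + α + β) * (2 * ((n:ℝ)+1) + α + β + 1) * (2 * ((n:ℝ)+1) + α + β + 2)
      / (2 * (((n:ℝ)+1) + 1) * (((n:ℝ)+1) + α + β + 1) * (2 * ((n:ℝ)+1) + α + β))) * t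
    + ((2 * ((n:ℝ)+1) + α + β + 1) * (α ^ 2 - β ^ 2))
      / (2 * (((n:ℝ)+1) + 1) * (((n:ℝ)+1) + α + β + 1) * (2 * ((n:ℝ)+1) + α + β)))
      * jacobiP α β (n + 1) t
    - ((((n:ℝ)+1) + α) * (((n:ℝ)+1) + β) * (2 * ((n:ℝ)+1) + α + β + 2)
      / (2 * (((n:ℝ)+1) + 1) * (((n:ℝ)+1) + α + β + 1) * (2 * ((n:ℝ)+1) + α + β)))
      * jacobiP α β n t := rfl

/-- IVT sign helper. -/
lemma pos_of_no_zero_aux {f : ℝ → ℝ} (hf : Continuous f) {x y : ℝ} (hxy : x ≤ y)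
    (hy : 0 < f y) (hnz : ∀ z, x ≤ z → z ≤ y → f z ≠ 0) : 0 < f x := by
  rcases lt_trichotomy (f x) 0 with h | h | h
  · exfalso
    have := intermediate_value_Icc hxy hf.continuousOn
    have h0 : (0:ℝ) ∈ Set.Icc (f x) (f y) := ⟨h.le, hy.le⟩
    obtain ⟨z, hz, hz0⟩ := this h0
    exact hnz z hz.1 hz.2 hz0
  · exact absurd h (hnz x le_rfl hxy)
  · exact h

lemma limit_nonneg {f : ℝ → ℝ} (hf : Continuous f) (w : ℝ)
    (h : ∀ z, w < z → 0 < f z) : 0 ≤ f w := by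
  have ht : Tendsto f (nhdsWithin w (Set.Ioi w)) (nhds (f w)) :=
    (hf.tendsto w).mono_left nhdsWithin_le_nhds
  exact ge_of_tendsto ht (eventually_nhdsWithin_of_forall fun z hz => (h z hz).le)

section Main
variable {α β : ℝ} (hα : -1/2 ≤ α) (hβα : β ≤ α) (hβ : -1 < β)

include hα hβα hβ

omit hα in
lemma coeffs_pos (m : ℝ) (hm : 1 ≤ m) (hα : -1/2 ≤ α) :
    0 < 2*m+α+β ∧ 0 < 2*m+α+β+1 ∧ 0 < 2*m+α+β+2 ∧ 0 < m+α ∧ 0 < m+β ∧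
    0 < m+1 ∧ 0 < m+α+β+1 := by
  refine ⟨by linarith, by linarith, by linarith, by linarith, by linarith, by linarith, by linarith⟩

/-- Positivity and ratio growth on `[1, ∞)`. -/
lemma jacobiP_growth : ∀ k : ℕ, ∀ y : ℝ, 1 ≤ y →
    0 < jacobiP α β k y ∧
    ((k:ℝ)+1+α)/((k:ℝ)+1) * jacobiP α β k y ≤ jacobiP α β (k+1) y := by
  intro k
  induction k with
  | zero =>
      intro y hy
      have h1 : jacobiP α β 0 y = 1 := rfl
      have h2 : jacobiP α β 1 y = ((α + β + 2) * y + (α - β)) / 2 := rfl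
      constructor
      · rw [h1]; norm_num
      · rw [h1, h2]
        have h3 : 0 ≤ (α+β+2)*(y-1) := mul_nonneg (by linarith) (by linarith)
        push_cast
        norm_num
        nlinarith [h3]
  | succ k ih =>
      intro y hy
      obtain ⟨hPk, hPk1⟩ := ih y hy
      set m : ℝ := (k:ℝ) + 1 with hmdef
      have hm1 : (1:ℝ) ≤ m := by
        rw [hmdef]; have := Nat.cast_nonneg (α := ℝ) k; linarith
      obtain ⟨c1, c2, c3, c4, c5, c6, c7⟩ := coeffs_pos hβα hβ m hm1 hα
      have hm0 : (0:ℝ) < m := by linarith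
      set a := (2 * m + α + β) * (2 * m + α + β + 1) * (2 * m + α + β + 2) with hadef
      set b := (2 * m + α + β + 1) * (α ^ 2 - β ^ 2) with hbdef
      set c := (m + α) * (m + β) * (2 * m + α + β + 2) with hcdef
      set d := 2 * (m + 1) * (m + α + β + 1) * (2 * m + α + β) with hddef
      have ha : 0 < a := by rw [hadef]; positivity
      have hc : 0 < c := by rw [hcdef]; positivity
      have hd : 0 < d := by rw [hddef]; positivity
      have hrec : jacobiP α β (k+2) y = ((a/d)*y + b/d) * jacobiP α β (k+1) y
          - (c/d) * jacobiP α β k y := by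
        rw [jacobiP_rec]
      set Pk := jacobiP α β k y
      set Pk1 := jacobiP α β (k+1) y
      have hσeq : ((k:ℝ)+1+α)/((k:ℝ)+1) = (m+α)/m := by rw [hmdef]
      rw [hσeq] at hPk1
      have hPk1pos : 0 < Pk1 := by
        have hσ : 0 < (m+α)/m := div_pos (by linarith) hm0
        calc (0:ℝ) < (m+α)/m * Pk := mul_pos hσ hPk
          _ ≤ Pk1 := hPk1
      refine ⟨hPk1pos, ?_⟩
      -- the key identity
      have hid : a/d + b/d - (m+1+α)/(m+1) = 2*(c/d)*(m/(m+α)) := by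
        rw [hadef, hbdef, hcdef, hddef]
        field_simp
        ring
      have h5 : (m+α) * Pk ≤ m * Pk1 := by
        rw [div_mul_eq_mul_div, div_le_iff₀ hm0] at hPk1
        linarith
      have t1 : 0 ≤ (a/d)*(y-1)*Pk1 :=
        mul_nonneg (mul_nonneg (by positivity) (by linarith)) hPk1pos.le
      have t2 : 0 ≤ (c/d)/(m+α) * (m*Pk1 - (m+α)*Pk) :=
        mul_nonneg (by positivity) (by linarith)
      have t3 : 0 ≤ (c/d)*Pk := mul_nonneg (by positivity) hPk.le
      have hidP : (a/d + b/d - (m+1+α)/(m+1)) * Pk1 = 2*(c/d)*(m/(m+α))*Pk1 := by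
        rw [hid]
      have hmach : 2*(c/d)*(m/(m+α))*Pk1 = 2*((c/d)/(m+α)*(m*Pk1)) := by
        field_simp
      have expand2 : (c/d)/(m+α) * (m*Pk1 - (m+α)*Pk)
          = (c/d)/(m+α)*(m*Pk1) - (c/d)/(m+α)*((m+α)*Pk) := by ring
      have hcan : (c/d)/(m+α)*((m+α)*Pk) = (c/d)*Pk := by
        field_simp
      have hgoal : ((k:ℝ)+1+1+α)/((k:ℝ)+1+1) = (m+1+α)/(m+1) := by rw [hmdef]
      push_cast
      rw [hgoal, hrec]
      linarith [t1, t2, t3, hidP, hmach, expand2, hcan]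

lemma jacobiP_one_pos (k : ℕ) : 0 < jacobiP α β k 1 :=
  (jacobiP_growth hα hβα hβ k 1 le_rfl).1

lemma pos_right (k : ℕ) (x : ℝ) (hx : ∀ z, jacobiP α β k z = 0 → z ≤ x) :
    ∀ y, x < y → 0 < jacobiP α β k y := by
  intro y hy
  have h1 : 0 < jacobiP α β k (max y 1) :=
    (jacobiP_growth hα hβα hβ k (max y 1) (le_max_right y 1)).1
  apply pos_of_no_zero_aux (jacobiP_continuous α β k) (le_max_left y 1) h1
  intro z hz _ h0
  exact absurd (hx z h0) (by push_neg; linarith)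

/-- Key "no sign change to the right" descent lemma. -/
lemma descent : ∀ k : ℕ, ∀ x : ℝ, (∀ z, x < z → jacobiP α β (k+1) z ≠ 0) →
    ∀ y, x < y → 0 < jacobiP α β k y := by
  intro k
  induction k using Nat.strong_induction_on with
  | _ k IH =>
    intro x hx y hxy
    by_contra hle
    push_neg at hle
    rcases Nat.eq_zero_or_pos k with hk0 | hkpos
    · subst hk0
      have : jacobiP α β 0 y = 1 := rfl
      rw [this] at hle; linarith
    have hy1 : y < 1 := by
      by_contra h
      push_neg at h
      exact absurd (jacobiP_growth hα hβα hβ k y h).1 (by linarith)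
    set Z := Set.Icc y 1 ∩ {z | jacobiP α β k z = 0} with hZdef
    have hZne : Z.Nonempty := by
      rcases eq_or_lt_of_le hle with h0 | hneg
      · exact ⟨y, ⟨le_rfl, hy1.le⟩, h0⟩
      · have h1 : 0 < jacobiP α β k 1 := jacobiP_one_pos hα hβα hβ k
        have := intermediate_value_Icc hy1.le (jacobiP_continuous α β k).continuousOn
        obtain ⟨z, hz, hz0⟩ := this ⟨hneg.le, h1.le⟩
        exact ⟨z, hz, hz0⟩
    have hZcl : IsCompact Z := by
      apply isCompact_Icc.inter_right
      exact isClosed_eq (jacobiP_continuous α β k) continuous_const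
    set w := sSup Z with hwdef
    have hwZ : w ∈ Z := hZcl.sSup_mem hZne
    have hwzero : jacobiP α β k w = 0 := hwZ.2
    have hyw : y ≤ w := hwZ.1.1
    have hnoz : ∀ z, w < z → jacobiP α β k z ≠ 0 := by
      intro z hz h0
      rcases le_or_gt z 1 with hz1 | hz1
      · have hzZ : z ∈ Z := ⟨⟨le_trans hyw hz.le, hz1⟩, h0⟩
        have := le_csSup hZcl.bddAbove hzZ
        rw [← hwdef] at this
        linarith
      · exact absurd (jacobiP_growth hα hβα hβ k z hz1.le).1 (by rw [h0]; exact lt_irrefl 0)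
    have hpk1w : 0 < jacobiP α β (k+1) w := by
      apply pos_right hα hβα hβ (k+1) x _ w (by linarith)
      intro z h0
      by_contra hc
      push_neg at hc
      exact hx z hc h0
    obtain ⟨j, rfl⟩ : ∃ j, k = j + 1 := ⟨k - 1, by omega⟩
    have hjpos : ∀ z, w < z → 0 < jacobiP α β j z := IH j (by omega) w hnoz
    have hjw : 0 ≤ jacobiP α β j w := limit_nonneg (jacobiP_continuous α β j) w hjpos
    set m : ℝ := (j:ℝ) + 1 with hmdef
    have hm1 : (1:ℝ) ≤ m := by
      rw [hmdef]; have := Nat.cast_nonneg (α := ℝ) j; linarith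
    obtain ⟨c1, c2, c3, c4, c5, c6, c7⟩ := coeffs_pos hβα hβ m hm1 hα
    have hrec := jacobiP_rec α β w j
    rw [← hmdef] at hrec
    rw [hwzero] at hrec
    have hcd : 0 ≤ (m + α) * (m + β) * (2*m+α+β+2) / (2*(m+1)*(m+α+β+1)*(2*m+α+β))
        * jacobiP α β j w := by
      apply mul_nonneg (by positivity) hjw
    have hfin : jacobiP α β (j+2) w ≤ 0 := by
      rw [hrec]; linarith
    linarith [hpk1w]
end Main


/-- Consequence of the ordering lemma: for `t ∈ [t_{n,n}, 1)` and `0 ≤ k ≤ n`,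
`P_k(t)/P_k(1) ≥ P_n(t)/P_n(1) ≥ 0`; in particular `P_k(t) ≥ 0`. -/
theorem jacobi_ordering_nonneg (α β : ℝ) (hα : -1/2 ≤ α) (hβα : β ≤ α) (hβ : -1 < β)
    (n : ℕ) (hn : 1 ≤ n) (tnn : ℝ)
    (hzero : jacobiP α β n tnn = 0)
    (hmax : ∀ t : ℝ, jacobiP α β n t = 0 → t ≤ tnn)
    (t : ℝ) (ht : tnn ≤ t) (ht1 : t < 1)
    (k : ℕ) (hkn : k ≤ n) :
    jacobiP α β k t / jacobiP α β k 1 ≥ jacobiP α β n t / jacobiP α β n 1 ∧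
    jacobiP α β n t / jacobiP α β n 1 ≥ 0 ∧
    0 ≤ jacobiP α β k t := by
  have hg : ∀ j : ℕ, 0 < jacobiP α β j 1 := jacobiP_one_pos hα hβα hβ
  -- all jacobiP of index ≤ n are positive strictly to the right of tnn
  have chain : ∀ i : ℕ, i ≤ n → ∀ y, tnn < y → 0 < jacobiP α β (n - i) y := by
    intro i
    induction i with
    | zero => intro _ y hy; simpa using pos_right hα hβα hβ n tnn hmax y hy
    | succ i ih =>
        intro hi y hy
        have hne : ∀ z, tnn < z → jacobiP α β (n - i) z ≠ 0 :=
          fun z hz => (ih (by omega) z hz).ne'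
        have heq : n - i = (n - (i+1)) + 1 := by omega
        rw [heq] at hne
        exact descent hα hβα hβ (n - (i+1)) tnn hne y hy
  have hposk : ∀ j : ℕ, j ≤ n → ∀ y, tnn < y → 0 < jacobiP α β j y := by
    intro j hj y hy
    have := chain (n - j) (by omega) y hy
    rwa [show n - (n - j) = j by omega] at this
  have hnonneg : ∀ j : ℕ, j ≤ n → ∀ s, tnn ≤ s → 0 ≤ jacobiP α β j s := by
    intro j hj s hs
    rcases eq_or_lt_of_le hs with h | h
    · subst h
      exact limit_nonneg (jacobiP_continuous α β j) tnn (fun z hz => hposk j hj z hz)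
    · exact (hposk j hj s h).le
  -- the telescoping quantity E j is nonnegative
  have hE : ∀ j : ℕ, j < n →
      0 ≤ jacobiP α β (j+1) 1 * jacobiP α β j t - jacobiP α β j 1 * jacobiP α β (j+1) t := by
    intro j
    induction j with
    | zero =>
        intro _
        have e0 : jacobiP α β 0 t = 1 := rfl
        have e1 : jacobiP α β 0 1 = 1 := rfl
        have e2 : jacobiP α β 1 t = ((α + β + 2) * t + (α - β)) / 2 := rfl
        have e3 : jacobiP α β 1 1 = ((α + β + 2) * 1 + (α - β)) / 2 := rfl
        rw [e0, e1, e2, e3]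
        have h3 : 0 ≤ (α+β+2)*(1-t) := mul_nonneg (by linarith) (by linarith)
        nlinarith
    | succ j ih =>
        intro hj
        have hEj := ih (by omega)
        set m : ℝ := (j:ℝ) + 1 with hmdef
        have hm1 : (1:ℝ) ≤ m := by
          rw [hmdef]; have := Nat.cast_nonneg (α := ℝ) j; linarith
        obtain ⟨c1, c2, c3, c4, c5, c6, c7⟩ := coeffs_pos hβα hβ m hm1 hα
        have hrt := jacobiP_rec α β t j
        have hr1 := jacobiP_rec α β 1 j
        rw [← hmdef] at hrt hr1
        set a := (2 * m + α + β) * (2 * m + α + β + 1) * (2 * m + α + β + 2) with hadef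
        set c := (m + α) * (m + β) * (2 * m + α + β + 2) with hcdef
        set d := 2 * (m + 1) * (m + α + β + 1) * (2 * m + α + β) with hddef
        have ha : 0 < a := by rw [hadef]; positivity
        have hc : 0 < c := by rw [hcdef]; positivity
        have hd : 0 < d := by rw [hddef]; positivity
        have hkey : jacobiP α β (j+2) 1 * jacobiP α β (j+1) t
            - jacobiP α β (j+1) 1 * jacobiP α β (j+2) t
            = (a/d) * (1 - t) * jacobiP α β (j+1) 1 * jacobiP α β (j+1) t
              + (c/d) * (jacobiP α β (j+1) 1 * jacobiP α β j t
                         - jacobiP α β j 1 * jacobiP α β (j+1) t) := by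
          rw [hrt, hr1]; ring
        rw [hkey]
        have hterm1 : 0 ≤ (a/d) * (1 - t) * jacobiP α β (j+1) 1 * jacobiP α β (j+1) t := by
          apply mul_nonneg
          apply mul_nonneg
          apply mul_nonneg (by positivity) (by linarith)
          exact (hg (j+1)).le
          exact hnonneg (j+1) (by omega) t ht
        have hterm2 : 0 ≤ (c/d) * (jacobiP α β (j+1) 1 * jacobiP α β j t
            - jacobiP α β j 1 * jacobiP α β (j+1) t) := mul_nonneg (by positivity) hEj
        linarith
  -- ratio monotonicity
  have hstep : ∀ j : ℕ, j < n →
      jacobiP α β (j+1) t / jacobiP α β (j+1) 1 ≤ jacobiP α β j t / jacobiP α β j 1 := by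
    intro j hj
    rw [div_le_div_iff₀ (hg (j+1)) (hg j)]
    have := hE j hj
    linarith
  have hmono : ∀ i : ℕ, ∀ j : ℕ, j + i ≤ n →
      jacobiP α β (j+i) t / jacobiP α β (j+i) 1 ≤ jacobiP α β j t / jacobiP α β j 1 := by
    intro i
    induction i with
    | zero => intro j _; simp
    | succ i ih =>
        intro j hj
        calc jacobiP α β (j+(i+1)) t / jacobiP α β (j+(i+1)) 1
            = jacobiP α β ((j+1)+i) t / jacobiP α β ((j+1)+i) 1 := by ring_nf
          _ ≤ jacobiP α β (j+1) t / jacobiP α β (j+1) 1 := ih (j+1) (by omega)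
          _ ≤ jacobiP α β j t / jacobiP α β j 1 := hstep j (by omega)
  refine ⟨?_, ?_, hnonneg k hkn t ht⟩
  · have := hmono (n - k) k (by omega)
    rwa [show k + (n - k) = n by omega] at this
  · exact div_nonneg (hnonneg n le_rfl t ht) (hg n).le
end
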